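/- Let η be the Minkowski bilinear form on ℝ⁴, η(x,y) = x₀y₀ − x₁y₁ − x₂y₂ − x₃y₃, and let e = (0,1,0,0). Then the tube T_e = {x ∈ ℝ⁴ : η(e,x)² = η(e,e)·η(x,x)} is exactly the image of the three-parameter map (τ, a, ψ) ↦ τ·e + (a, 0, a·cos ψ, a·sin ψ) = (a, τ, a·cos ψ, a·sin ψ), with τ, a, ψ ranging over ℝ. Hence the spacelike 'straight line' in Minkowski space is a three-dimensional surface containing the one-dimensional line {τ·e : τ ∈ ℝ}. -/

import Mathlib

/-! For `e = (0,1,0,0)` the tube equation `η(e,x)² = η(e,e) η(x,x)` reduces to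
`x₀² = x₂² + x₃²`, a cone with free `x₁`-direction, and polar coordinates of `(x₂, x₃)`
parametrize that cone. -/

open Real

/-- Polar coordinates of `(b, c)`, which has norm `|a|`; for negative `a` the angle is turned
through `π`. -/
theorem exists_angle_of_sq_eq_sq_add_sq {a b c : ℝ} (h : a ^ 2 = b ^ 2 + c ^ 2) :
    ∃ ψ : ℝ, b = a * cos ψ ∧ c = a * sin ψ := by
  set z : ℂ := ⟨b, c⟩
  have hz : ‖z‖ = |a| := by
    rw [Complex.norm_eq_sqrt_sq_add_sq, ← h, sqrt_sq_eq_abs]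
  have hb : b = ‖z‖ * cos z.arg := (Complex.norm_mul_cos_arg z).symm
  have hc : c = ‖z‖ * sin z.arg := (Complex.norm_mul_sin_arg z).symm
  rcases abs_cases a with ⟨ha, -⟩ | ⟨ha, -⟩
  · exact ⟨z.arg, by rwa [hz, ha] at hb, by rwa [hz, ha] at hc⟩
  · refine ⟨z.arg + π, ?_, ?_⟩
    · rw [cos_add_pi, hb, hz, ha]; ring
    · rw [sin_add_pi, hc, hz, ha]; ring

theorem sq_eq_sq_add_sq_iff_exists_angle {a b c : ℝ} :
    a ^ 2 = b ^ 2 + c ^ 2 ↔ ∃ ψ : ℝ, b = a * cos ψ ∧ c = a * sin ψ := by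
  refine ⟨exists_angle_of_sq_eq_sq_add_sq, ?_⟩
  rintro ⟨ψ, rfl, rfl⟩
  linear_combination a ^ 2 * (sin_sq_add_cos_sq ψ).symm

theorem minkowski_tube_e₁_iff
    (η : (Fin 4 → ℝ) → (Fin 4 → ℝ) → ℝ)
    (hη : ∀ x y : Fin 4 → ℝ, η x y = x 0 * y 0 - x 1 * y 1 - x 2 * y 2 - x 3 * y 3)
    (x : Fin 4 → ℝ) :
    η ![0, 1, 0, 0] x ^ 2 = η ![0, 1, 0, 0] ![0, 1, 0, 0] * η x x ↔
      x 0 ^ 2 = x 2 ^ 2 + x 3 ^ 2 := by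
  simp only [hη, Matrix.cons_val]
  constructor <;> intro h <;> linear_combination h

/-- In Minkowski space, the tube in the direction of the spacelike vector
`e = (0,1,0,0)` is exactly the image of the three-parameter map
`(τ, a, ψ) ↦ (a, τ, a cos ψ, a sin ψ)`; in particular it contains the
one-dimensional line `{τ • e : τ ∈ ℝ}`. -/
theorem minkowski_spacelike_tube_parametrization
    (η : (Fin 4 → ℝ) → (Fin 4 → ℝ) → ℝ)
    (hη : ∀ x y : Fin 4 → ℝ,
      η x y = x 0 * y 0 - x 1 * y 1 - x 2 * y 2 - x 3 * y 3)
    (e : Fin 4 → ℝ) (he : e = ![0, 1, 0, 0]) :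
    {x : Fin 4 → ℝ | (η e x) ^ 2 = η e e * η x x} =
      Set.range (fun p : ℝ × ℝ × ℝ =>
        (fun τ a ψ => ![a, τ, a * Real.cos ψ, a * Real.sin ψ])
          p.1 p.2.1 p.2.2) ∧
    Set.range (fun τ : ℝ => τ • e) ⊆
      {x : Fin 4 → ℝ | (η e x) ^ 2 = η e e * η x x} := by
  subst he
  have tube_eq : {x : Fin 4 → ℝ | η ![0, 1, 0, 0] x ^ 2 =
      η ![0, 1, 0, 0] ![0, 1, 0, 0] * η x x} =
      Set.range (fun p : ℝ × ℝ × ℝ => ![p.2.1, p.1, p.2.1 * cos p.2.2, p.2.1 * sin p.2.2]) := by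
    ext x
    simp only [Set.mem_ofPred_eq, minkowski_tube_e₁_iff η hη, sq_eq_sq_add_sq_iff_exists_angle,
      Set.mem_range, Prod.exists]
    constructor
    · rintro ⟨ψ, h2, h3⟩
      exact ⟨x 1, x 0, ψ, by ext i; fin_cases i <;> simp [h2, h3]⟩
    · rintro ⟨τ, a, ψ, rfl⟩
      exact ⟨ψ, rfl, rfl⟩
  refine ⟨tube_eq, ?_⟩
  rintro _ ⟨τ, rfl⟩
  -- the line is the slice `a = 0` of the parametrization
  rw [tube_eq]
  exact ⟨(τ, 0, 0), by ext i; fin_cases i <;> simp⟩
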